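/- The quotient of the set of 1-formulas of L_□ by the relation of S5[Con]-provable equivalence has exactly 4096 elements. -/

import Mathlib

/-!
A pointed profile `⟨S, s⟩` consists of a set `S ⊆ {T, F, N}` of states of `x₁` and a state
`s ∈ S`; it is described by the constituent `χ_s(x₁) ∧ ⋀_{t ∈ S} ◇χ_t(x₁) ∧ ⋀_{t ∉ S} ¬◇χ_t(x₁)`,
and there are twelve of them. S5 proves that the constituents are exhaustive, and by induction
on a 1-formula `φ` each constituent proves `φ` or `¬φ`, according to the truth value of `φ` in
the `Con`-model whose worlds realize exactly the states in `S`. Together with soundness, two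
1-formulas are S5[Con]-equivalent iff they have the same truth table on the pointed profiles;
disjunctions of constituents realize every truth table, so there are `2 ^ 12 = 4096` classes.
-/

namespace KripkeModal

/-- Formulas of the modal language `L_□`: atoms `T(x)`, `F(x)` for variables
`x : ℕ`, negation, conjunction, and box. -/
inductive Fml : Type
  | tt : ℕ → Fml   -- T(x)
  | ff : ℕ → Fml   -- F(x)
  | neg : Fml → Fml
  | and : Fml → Fml → Fml
  | box : Fml → Fml
deriving DecidableEq

namespace Fml

/-- Material implication, defined from `¬, ∧`. -/
def imp (φ ψ : Fml) : Fml := neg (and φ (neg ψ))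

/-- Disjunction, defined from `¬, ∧`. -/
def or (φ ψ : Fml) : Fml := neg (and (neg φ) (neg ψ))

/-- Biconditional. -/
def iff (φ ψ : Fml) : Fml := and (imp φ ψ) (imp ψ φ)

/-- Diamond: `◇φ := ¬□¬φ`. -/
def dia (φ : Fml) : Fml := neg (box (neg φ))

/-- `N(x) := ¬T(x) ∧ ¬F(x)`. -/
def Nf (x : ℕ) : Fml := and (neg (tt x)) (neg (ff x))

/-- A fixed contradiction. -/
def bot : Fml := and (tt 0) (neg (tt 0))

end Fml

open Fml

/-- Evaluate a formula propositionally under a valuation `v` of the "atoms":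
the atomic formulas `T(x)`, `F(x)` and all boxed formulas are treated as
propositional atoms. -/
def evalProp (v : Fml → Bool) : Fml → Bool
  | Fml.neg φ => !(evalProp v φ)
  | Fml.and φ ψ => evalProp v φ && evalProp v ψ
  | φ => v φ

/-- A formula is a substitution instance of a classical propositional tautology
iff it evaluates to true under every propositional valuation of its atoms. -/
def Tautology (φ : Fml) : Prop := ∀ v : Fml → Bool, evalProp v φ = true

/-- Provability in the modal system `S5[Ax]`: the smallest set of formulas
containing all substitution instances of propositional tautologies, all
instances of K, T and 5, all formulas in `Ax`, closed under modus ponens and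
necessitation.  Taking `Ax = ∅` gives `S5` itself. -/
inductive Prv (Ax : Set Fml) : Fml → Prop
  | taut {φ} : Tautology φ → Prv Ax φ
  | axK (A B : Fml) : Prv Ax (imp (box (imp A B)) (imp (box A) (box B)))
  | axT (A : Fml) : Prv Ax (imp (box A) A)
  | ax5 (A : Fml) : Prv Ax (imp (dia A) (box (dia A)))
  | axm {φ} : φ ∈ Ax → Prv Ax φ
  | mp {A B} : Prv Ax (imp A B) → Prv Ax A → Prv Ax B
  | nec {A} : Prv Ax A → Prv Ax (box A)

/-- A system is consistent if it does not prove a contradiction. -/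
def Consistent (Ax : Set Fml) : Prop := ¬ Prv Ax Fml.bot

/-- The axiom schema `Con`: `¬(T(x) ∧ F(x))`. -/
def ConAx : Set Fml := { φ | ∃ x : ℕ, φ = neg (and (tt x) (ff x)) }

/-- The axiom schema `Ground`: `(◇T(x) ∧ ◇F(x)) → ◇N(x)`. -/
def GroundAx : Set Fml :=
  { φ | ∃ x : ℕ, φ = imp (and (dia (tt x)) (dia (ff x))) (dia (Nf x)) }

/-- Conjunction of a list of formulas (empty conjunction is `¬⊥`). -/
def bigAnd : List Fml → Fml
  | [] => Fml.neg Fml.bot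
  | [φ] => φ
  | φ :: ψ :: rest => Fml.and φ (bigAnd (ψ :: rest))

/-- Disjunction of a list of formulas (the empty disjunction is the fixed
contradiction `⊥`). -/
def bigOr : List Fml → Fml
  | [] => Fml.bot
  | [φ] => φ
  | φ :: ψ :: rest => Fml.or φ (bigOr (ψ :: rest))

/-- The axiom schema `Min_n`: all instances
`(◇N(x_1) ∧ … ∧ ◇N(x_n)) → ◇(N(x_1) ∧ … ∧ N(x_n))` obtained by substituting
arbitrary (not necessarily distinct) variables for `x_1, …, x_n`. -/
def MinAx (n : ℕ) : Set Fml :=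
  { φ | ∃ l : List ℕ, l.length = n ∧
      φ = imp (bigAnd (l.map (fun x => dia (Nf x)))) (dia (bigAnd (l.map Nf))) }

/-- A formula is extensional if it contains no `□`. -/
def Extensional : Fml → Prop
  | tt _ => True
  | ff _ => True
  | Fml.neg φ => Extensional φ
  | Fml.and φ ψ => Extensional φ ∧ Extensional ψ
  | box _ => False

/-- A formula is intensional if every atomic subformula occurs within the
scope of a `□`. -/
def Intensional : Fml → Prop
  | tt _ => False
  | ff _ => False
  | Fml.neg φ => Intensional φ
  | Fml.and φ ψ => Intensional φ ∧ Intensional ψ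
  | box _ => True

/-- The set of variables occurring in a formula. -/
def vars : Fml → Set ℕ
  | tt x => {x}
  | ff x => {x}
  | Fml.neg φ => vars φ
  | Fml.and φ ψ => vars φ ∪ vars ψ
  | box φ => vars φ

/-- An `n`-formula: one whose atoms use only the variables `x_1, …, x_n`. -/
def IsNFormula (n : ℕ) (φ : Fml) : Prop := vars φ ⊆ {x | 1 ≤ x ∧ x ≤ n}

/-- A 1-formula: one whose atoms use only the single variable `x_1`. -/
abbrev Is1Formula (φ : Fml) : Prop := IsNFormula 1 φ

/-- `φ` is `Γ`-maximal for the system `S5[Ax]`. -/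
def GammaMaximal (Ax : Set Fml) (Γ : Set Fml) (φ : Fml) : Prop :=
  Consistent (Ax ∪ {φ}) ∧ φ ∈ Γ ∧
    ∀ ψ ∈ Γ, Prv Ax (imp φ ψ) ∨ Prv Ax (imp φ (neg ψ))

/-- Extensional `n`-isolators for `S5[Ax]`. -/
def ExtIsolator (n : ℕ) (Ax : Set Fml) (φ : Fml) : Prop :=
  GammaMaximal Ax {ψ | Extensional ψ ∧ IsNFormula n ψ} φ

/-- Intensional `n`-isolators for `S5[Ax]`. -/
def IntIsolator (n : ℕ) (Ax : Set Fml) (φ : Fml) : Prop :=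
  GammaMaximal Ax {ψ | Intensional ψ ∧ IsNFormula n ψ} φ

/-- An `n`-isolator for `S5[Ax]`: a consistent conjunction `ε ∧ ι` of an
extensional `n`-isolator and an intensional `n`-isolator. -/
def Isolator (n : ℕ) (Ax : Set Fml) (φ : Fml) : Prop :=
  ∃ ε ι, ExtIsolator n Ax ε ∧ IntIsolator n Ax ι ∧
    φ = Fml.and ε ι ∧ Consistent (Ax ∪ {φ})

/-- Satisfaction in a model `(W, V)` (with `V = (V1, V2)`) at a world `w`. -/
def Sat {W : Type*} (V1 V2 : ℕ → Set W) : W → Fml → Prop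
  | w, tt x => w ∈ V1 x
  | w, ff x => w ∈ V2 x
  | w, Fml.neg φ => ¬ Sat V1 V2 w φ
  | w, Fml.and φ ψ => Sat V1 V2 w φ ∧ Sat V1 V2 w ψ
  | _, box φ => ∀ v, Sat V1 V2 v φ

/-- The variable assignment satisfies the `Con` constraint. -/
def ConC {W : Type*} (V1 V2 : ℕ → Set W) : Prop := ∀ x, V1 x ∩ V2 x = ∅

/-- The variable assignment satisfies the `Ground` constraint. -/
def GroundC {W : Type*} (V1 V2 : ℕ → Set W) : Prop :=
  ∀ x, (V1 x).Nonempty → (V2 x).Nonempty → ((V1 x ∪ V2 x)ᶜ : Set W).Nonempty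

/-- The variable assignment satisfies the `Min` constraint. -/
def MinC {W : Type*} (V1 V2 : ℕ → Set W) : Prop :=
  ∀ l : List ℕ, l ≠ [] → (∀ x ∈ l, ((V1 x ∪ V2 x)ᶜ : Set W).Nonempty) →
    (⋂ x ∈ l, ((V1 x ∪ V2 x)ᶜ : Set W)).Nonempty

/-- The prime conditions for a subset `S` of the tensor `[3]^n`, realized as
`Fin n → Fin 3` where the value `0` stands for the layer `T`, `1` for `F`,
and `2` for `N` (i.e. `1, 2, 3` in the paper's numbering). -/
def PrimeConditions (n : ℕ) (S : Set (Fin n → Fin 3)) : Prop :=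
  S.Nonempty ∧
  (∀ j : Fin n, (S ∩ {a | a j = 0}).Nonempty → (S ∩ {a | a j = 1}).Nonempty →
      (S ∩ {a | a j = 2}).Nonempty) ∧
  ∀ J : Set (Fin n), J.Nonempty →
    (∀ j ∈ J, (S ∩ {a | a j = 2}).Nonempty) →
    (S ∩ ⋂ j ∈ J, {a | a j = 2}).Nonempty

/-- `χ_1 = T`, `χ_2 = F`, `χ_3 = N` (with `Fin 3` values `0, 1, 2`). -/
def chi (k : Fin 3) (x : ℕ) : Fml :=
  if k = 0 then tt x else if k = 1 then ff x else Nf x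

/-- The extensional `n`-isolator `φ_a = χ_{a_1}(x_1) ∧ … ∧ χ_{a_n}(x_n)`
associated with a tuple `a ∈ [3]^n`. -/
def tupleFml {n : ℕ} (a : Fin n → Fin 3) : Fml :=
  bigAnd ((List.finRange n).map (fun i => chi (a i) (i.1 + 1)))

open Classical in
/-- The pre-`n`-isolator of `S ⊆ [3]^n`:
`⋀_{a ∈ S} ◇φ_a ∧ ⋀_{a ∉ S} ¬◇φ_a`. -/
noncomputable def preIsolator (n : ℕ) (S : Set (Fin n → Fin 3)) : Fml :=
  bigAnd (((Finset.univ : Finset (Fin n → Fin 3)).toList).map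
    (fun a => if a ∈ S then dia (tupleFml a) else Fml.neg (dia (tupleFml a))))

section Propositional

variable {Ax : Set Fml} {A B C φ : Fml}

@[simp] lemma evalProp_neg (v : Fml → Bool) : evalProp v (neg A) = !evalProp v A := rfl

@[simp] lemma evalProp_and (v : Fml → Bool) :
    evalProp v (Fml.and A B) = (evalProp v A && evalProp v B) := rfl

@[simp] lemma evalProp_box (v : Fml → Bool) : evalProp v (box A) = v (box A) := rfl
@[simp] lemma evalProp_tt (v : Fml → Bool) (x : ℕ) : evalProp v (tt x) = v (tt x) := rfl
@[simp] lemma evalProp_ff (v : Fml → Bool) (x : ℕ) : evalProp v (ff x) = v (ff x) := rfl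

theorem Prv.mp_taut (hA : Prv Ax A)
    (h : ∀ v, evalProp v A = true → evalProp v B = true) : Prv Ax B :=
  Prv.mp (Prv.taut fun v => by cases hv : evalProp v A <;> simp [imp, hv, h v]) hA

theorem Prv.and_intro (hA : Prv Ax A) (hB : Prv Ax B) : Prv Ax (Fml.and A B) :=
  Prv.mp (hA.mp_taut (B := imp B (Fml.and A B)) fun v h => by simp [imp, h]) hB

theorem Prv.imp_trans (hAB : Prv Ax (imp A B)) (hBC : Prv Ax (imp B C)) :
    Prv Ax (imp A C) :=
  (hAB.and_intro hBC).mp_taut fun v h => by simp [imp] at h ⊢; grind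

theorem Prv.of_entails {Γ : Finset Fml} (hΓ : ∀ γ ∈ Γ, Prv Ax γ)
    (h : ∀ v, (∀ γ ∈ Γ, evalProp v γ = true) → evalProp v φ = true) : Prv Ax φ := by
  induction Γ using Finset.induction_on generalizing φ with
  | empty => exact Prv.taut fun v => h v (by simp)
  | insert γ Γ _ ih =>
    refine Prv.mp (ih (fun δ hδ => hΓ δ (Finset.mem_insert_of_mem hδ)) fun v hv => ?_)
      (hΓ γ (Finset.mem_insert_self γ Γ))
    cases hγ : evalProp v γ
    · simp [imp, hγ]
    · simp [imp, h v (by simpa [hγ] using hv)]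

end Propositional

section S5

variable {Ax : Set Fml} {A B C : Fml}

theorem Prv.box_mono (h : Prv Ax (imp A B)) : Prv Ax (imp (box A) (box B)) :=
  (Prv.axK A B).mp h.nec

theorem Prv.box_and_mono (h : Prv Ax (imp (Fml.and A B) C)) :
    Prv Ax (imp (Fml.and (box A) (box B)) (box C)) := by
  have hA : Prv Ax (imp (box A) (box (imp B C))) :=
    Prv.box_mono <| h.mp_taut fun v h => by simp [imp] at h ⊢; grind
  exact (hA.and_intro (Prv.axK B C)).mp_taut fun v h => by simp [imp] at h ⊢; grind

theorem Prv.dia_box_mono (h : Prv Ax (imp (Fml.and A B) C)) :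
    Prv Ax (imp (Fml.and (dia A) (box B)) (dia C)) := by
  have hB : Prv Ax (imp (box B) (box (imp (neg C) (neg A)))) :=
    Prv.box_mono <| h.mp_taut fun v h => by simp [imp] at h ⊢; grind
  exact (hB.and_intro (Prv.axK (neg C) (neg A))).mp_taut fun v h => by
    simp [imp, dia] at h ⊢; grind

theorem prv_imp_dia (A : Fml) : Prv Ax (imp A (dia A)) :=
  (Prv.axT (neg A)).mp_taut fun v h => by simp [imp, dia] at h ⊢; grind

theorem prv_dia_box_imp_box (B : Fml) : Prv Ax (imp (dia (box B)) (box B)) := by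
  have hnn : Prv Ax (imp (box (neg (neg B))) (box B)) :=
    Prv.box_mono <| Prv.taut fun v => by simp [imp]
  have hnn' : Prv Ax (imp (box B) (box (neg (neg B)))) :=
    Prv.box_mono <| Prv.taut fun v => by simp [imp]
  have hdia : Prv Ax (imp (box (dia (neg B))) (box (neg (box B)))) :=
    Prv.box_mono <| hnn'.mp_taut fun v h => by simp [imp, dia] at h ⊢; grind
  exact ((Prv.ax5 (neg B)).and_intro (hnn.and_intro hdia)).mp_taut fun v h => by
    simp [imp, dia] at h ⊢; grind

theorem prv_box_imp_box_box (B : Fml) : Prv Ax (imp (box B) (box (box B))) :=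
  ((prv_imp_dia (box B)).and_intro ((Prv.ax5 (box B)).and_intro
    (prv_dia_box_imp_box B).box_mono)).mp_taut fun v h => by simp [imp] at h ⊢; grind

theorem prv_not_dia_imp_box_not_dia (A : Fml) :
    Prv Ax (imp (neg (dia A)) (box (neg (dia A)))) := by
  have h : Prv Ax (imp (box (neg A)) (neg (dia A))) := Prv.taut fun v => by simp [imp, dia]
  exact ((prv_box_imp_box_box (neg A)).and_intro h.box_mono).mp_taut fun v h => by
    simp [imp, dia] at h ⊢; grind

theorem Prv.imp_box_and (hA : Prv Ax (imp A (box A))) (hB : Prv Ax (imp B (box B))) :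
    Prv Ax (imp (Fml.and A B) (box (Fml.and A B))) :=
  ((hA.and_intro hB).and_intro (Prv.box_and_mono (A := A) (B := B) (C := Fml.and A B)
    (Prv.taut fun v => by simp [imp]; grind))).mp_taut fun v h => by simp [imp] at h ⊢; grind

end S5

section Soundness

variable {Ax : Set Fml} {A B φ : Fml} {W : Type*} {V1 V2 : ℕ → Set W} {w : W}

@[simp] lemma sat_neg : Sat V1 V2 w (neg A) ↔ ¬Sat V1 V2 w A := Iff.rfl
@[simp] lemma sat_and : Sat V1 V2 w (Fml.and A B) ↔ Sat V1 V2 w A ∧ Sat V1 V2 w B := Iff.rfl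
@[simp] lemma sat_box : Sat V1 V2 w (box A) ↔ ∀ u, Sat V1 V2 u A := Iff.rfl

open Classical in
lemma evalProp_decide_sat (w : W) :
    ∀ φ, evalProp (fun ψ => decide (Sat V1 V2 w ψ)) φ = decide (Sat V1 V2 w φ)
  | tt _ | ff _ | box _ => rfl
  | neg φ => by simp [evalProp_decide_sat w φ]
  | Fml.and φ ψ => by simp [evalProp_decide_sat w φ, evalProp_decide_sat w ψ]

theorem Prv.sat (hAx : ∀ ψ ∈ Ax, ∀ w, Sat V1 V2 w ψ) (h : Prv Ax φ) (w : W) :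
    Sat V1 V2 w φ := by
  induction h generalizing w with
  | taut ht =>
    classical
    simpa [evalProp_decide_sat] using ht fun ψ => decide (Sat V1 V2 w ψ)
  | axK A B => simp only [imp, sat_neg, sat_and, sat_box]; grind
  | axT A => simp only [imp, sat_neg, sat_and, sat_box]; grind
  | ax5 A => simp only [imp, dia, sat_neg, sat_and, sat_box]; grind
  | axm hψ => exact hAx _ hψ w
  | mp _ _ ihAB ihA => simp only [imp, sat_neg, sat_and] at ihAB; grind
  | nec _ ih => exact ih

theorem sat_of_mem_conAx (hC : ConC V1 V2) : ∀ ψ ∈ ConAx, ∀ w, Sat V1 V2 w ψ := by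
  rintro _ ⟨x, rfl⟩ w ⟨h1, h2⟩
  exact (hC x).subset ⟨h1, h2⟩

end Soundness

section Profiles

/-- Pointed profiles `⟨S, s⟩`: `S ⊆ {T, F, N}` is the set of states of `x₁` realized in a
model and `s ∈ S` the state at the evaluation world, with `0, 1, 2` standing for `T, F, N`
as in `chi`. -/
abbrev PointedProfile : Type := Σ S : Finset (Fin 3), S

def Holds (S : Finset (Fin 3)) (w : S) (φ : Fml) : Prop :=
  Sat (fun _ => {u : S | u.1 = 0}) (fun _ => {u : S | u.1 = 1}) w φ

theorem card_pointedProfile : Nat.card PointedProfile = 12 := by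
  rw [Nat.card_eq_fintype_card]; rfl

theorem Prv.holds {φ : Fml} (h : Prv ConAx φ) (S : Finset (Fin 3)) (w : S) : Holds S w φ := by
  refine h.sat (sat_of_mem_conAx fun x => ?_) w
  ext u
  simp only [Set.mem_inter_iff, Set.mem_ofPred_eq, Set.mem_empty_iff_false, iff_false]
  omega

def modalLit (t : Fin 3) (S : Finset (Fin 3)) : Fml :=
  if t ∈ S then dia (chi t 1) else neg (dia (chi t 1))

def profileFml (S : Finset (Fin 3)) : Fml :=
  Fml.and (modalLit 0 S) (Fml.and (modalLit 1 S) (modalLit 2 S))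

def constituent (s : Fin 3) (S : Finset (Fin 3)) : Fml := Fml.and (chi s 1) (profileFml S)

variable {S T : Finset (Fin 3)} {w : T} {s t : Fin 3} {x : ℕ} {φ ψ : Fml}

@[simp] lemma holds_tt : Holds T w (tt x) ↔ w.1 = 0 := Iff.rfl
@[simp] lemma holds_ff : Holds T w (ff x) ↔ w.1 = 1 := Iff.rfl
@[simp] lemma holds_neg : Holds T w (neg φ) ↔ ¬Holds T w φ := Iff.rfl
@[simp] lemma holds_and : Holds T w (Fml.and φ ψ) ↔ Holds T w φ ∧ Holds T w ψ := Iff.rfl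
@[simp] lemma holds_box : Holds T w (box φ) ↔ ∀ u, Holds T u φ := Iff.rfl

theorem holds_chi : Holds T w (chi t x) ↔ w.1 = t := by
  fin_cases t <;> simp [chi, Nf]; omega

theorem holds_dia_chi : Holds T w (dia (chi t x)) ↔ t ∈ T := by
  simp only [dia, holds_neg, holds_box, not_forall, not_not]
  exact ⟨fun ⟨u, hu⟩ => holds_chi.1 hu ▸ u.2, fun ht => ⟨⟨t, ht⟩, holds_chi.2 rfl⟩⟩

theorem holds_profileFml : Holds T w (profileFml S) ↔ T = S := by
  have hlit (t : Fin 3) : Holds T w (modalLit t S) ↔ (t ∈ T ↔ t ∈ S) := by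
    unfold modalLit; split_ifs with ht <;> simp [ht, holds_dia_chi]
  simp only [profileFml, holds_and, hlit, Finset.ext_iff, Fin.forall_fin_succ,
    IsEmpty.forall_iff, and_true]
  rfl

theorem holds_constituent : Holds T w (constituent s S) ↔ w.1 = s ∧ T = S := by
  rw [constituent, holds_and, holds_chi, holds_profileFml]

end Profiles

section Constituents

variable {Ax : Set Fml} {S : Finset (Fin 3)} {s t : Fin 3} {x : ℕ} {A B φ : Fml}

theorem prv_imp_of_forall_chi (h : ∀ t, Prv Ax (imp (Fml.and (chi t x) A) B)) :
    Prv Ax (imp A B) :=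
  ((h 0).and_intro ((h 1).and_intro (h 2))).mp_taut fun v h => by
    simp [imp, chi, Nf] at h ⊢; grind

theorem prv_con (x : ℕ) : Prv ConAx (neg (Fml.and (tt x) (ff x))) := Prv.axm ⟨x, rfl⟩

theorem prv_chi_imp_tt (s : Fin 3) (x : ℕ) :
    Prv ConAx (imp (chi s x) (if s = 0 then tt x else neg (tt x))) := by
  fin_cases s
  · exact Prv.taut fun v => by simp [imp, chi]
  · exact (prv_con x).mp_taut fun v h => by simp [imp, chi] at h ⊢; grind
  · exact Prv.taut fun v => by simp [imp, chi, Nf]; grind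

theorem prv_chi_imp_ff (s : Fin 3) (x : ℕ) :
    Prv ConAx (imp (chi s x) (if s = 1 then ff x else neg (ff x))) := by
  fin_cases s
  · exact (prv_con x).mp_taut fun v h => by simp [imp, chi] at h ⊢; grind
  · exact Prv.taut fun v => by simp [imp, chi]
  · exact Prv.taut fun v => by simp [imp, chi, Nf]; grind

theorem prv_constituent_imp_chi : Prv Ax (imp (constituent s S) (chi s 1)) :=
  Prv.taut fun v => by simp [imp, constituent]; grind

theorem prv_profileFml_imp_modalLit (t : Fin 3) :
    Prv Ax (imp (profileFml S) (modalLit t S)) :=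
  Prv.taut fun v => by fin_cases t <;> simp [imp, profileFml] <;> grind

theorem prv_profileFml_imp_box : Prv Ax (imp (profileFml S) (box (profileFml S))) := by
  have hlit (t : Fin 3) : Prv Ax (imp (modalLit t S) (box (modalLit t S))) := by
    unfold modalLit
    split_ifs
    · exact Prv.ax5 _
    · exact prv_not_dia_imp_box_not_dia _
  exact (hlit 0).imp_box_and ((hlit 1).imp_box_and (hlit 2))

theorem prv_constituent_imp_box (h : ∀ t ∈ S, Prv Ax (imp (constituent t S) φ)) (s : Fin 3) :
    Prv Ax (imp (constituent s S) (box φ)) := by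
  have hprof : Prv Ax (imp (profileFml S) φ) := prv_imp_of_forall_chi fun t => by
    by_cases ht : t ∈ S
    · exact h t ht
    · have hlit := prv_profileFml_imp_modalLit (Ax := Ax) (S := S) t
      rw [modalLit, if_neg ht] at hlit
      exact (hlit.and_intro (prv_imp_dia (chi t 1))).mp_taut fun v h => by
        simp [imp] at h ⊢; grind
  exact ((prv_profileFml_imp_box (S := S)).and_intro hprof.box_mono).mp_taut fun v h => by
    simp [imp, constituent] at h ⊢; grind

theorem prv_constituent_imp_not_box (ht : t ∈ S)
    (h : Prv Ax (imp (constituent t S) (neg φ))) (s : Fin 3) :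
    Prv Ax (imp (constituent s S) (neg (box φ))) := by
  have hlit := prv_profileFml_imp_modalLit (Ax := Ax) (S := S) t
  rw [modalLit, if_pos ht] at hlit
  have hnn : Prv Ax (imp (box φ) (box (neg (neg φ)))) :=
    Prv.box_mono <| Prv.taut fun v => by simp [imp]
  exact (hlit.and_intro ((prv_profileFml_imp_box (S := S)).and_intro
    (h.dia_box_mono.and_intro hnn))).mp_taut fun v h => by
      simp [imp, constituent, dia] at h ⊢; grind

theorem prv_of_forall_constituent
    (h : ∀ (S : Finset (Fin 3)) (w : S), Prv Ax (imp (constituent w S) A)) : Prv Ax A := by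
  refine Prv.of_entails
    (Γ := Finset.univ.image (fun p : PointedProfile => imp (constituent p.2 p.1) A) ∪
      Finset.univ.image fun t : Fin 3 => imp (box (neg (chi t 1))) (neg (chi t 1)))
    ?_ fun v hv => ?_
  · simp only [Finset.mem_union, Finset.mem_image, Finset.mem_univ, true_and]
    rintro _ (⟨p, rfl⟩ | ⟨t, rfl⟩)
    exacts [h p.1 p.2, Prv.axT _]
  -- The constituent read off from `v` holds; the `T`-instance puts its state into its profile.
  set s : Fin 3 := if v (tt 1) then 0 else if v (ff 1) then 1 else 2
  set S : Finset (Fin 3) := Finset.univ.filter fun t => v (box (neg (chi t 1))) = false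
  have hs : evalProp v (chi s 1) = true := by simp only [s]; split_ifs <;> simp_all [chi, Nf]
  have hsS : s ∈ S := by
    have := hv _ (Finset.mem_union_right _ (Finset.mem_image_of_mem _ (Finset.mem_univ s)))
    simp [imp] at this
    simp [S]; grind
  have hprof : evalProp v (profileFml S) = true := by
    have hlit (t) : evalProp v (modalLit t S) = true := by
      unfold modalLit; split_ifs with ht <;> simp_all [S, dia]
    simp [profileFml, hlit]
  have := hv _ (Finset.mem_union_left _
    (Finset.mem_image_of_mem _ (Finset.mem_univ ⟨S, ⟨s, hsS⟩⟩)))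
  simp [imp, constituent] at this
  grind

end Constituents

section OneFormulas

variable {φ ψ : Fml} {x : ℕ} {l : List Fml}

theorem is1Formula_tt_iff : Is1Formula (tt x) ↔ x = 1 := by
  simp [IsNFormula, vars]; omega

theorem is1Formula_ff_iff : Is1Formula (ff x) ↔ x = 1 := by
  simp [IsNFormula, vars]; omega

theorem is1Formula_neg_iff : Is1Formula (neg φ) ↔ Is1Formula φ := Iff.rfl

theorem is1Formula_and_iff : Is1Formula (Fml.and φ ψ) ↔ Is1Formula φ ∧ Is1Formula ψ :=
  Set.union_subset_iff

theorem is1Formula_constituent (s : Fin 3) (S : Finset (Fin 3)) :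
    Is1Formula (constituent s S) := by
  have hchi (t : Fin 3) : Is1Formula (chi t 1) := by
    fin_cases t <;>
      simp [chi, Nf, is1Formula_and_iff, is1Formula_neg_iff, is1Formula_tt_iff, is1Formula_ff_iff]
  have hlit (t : Fin 3) : Is1Formula (modalLit t S) := by
    unfold modalLit; split_ifs <;> exact hchi t
  exact is1Formula_and_iff.2
    ⟨hchi s, is1Formula_and_iff.2 ⟨hlit 0, is1Formula_and_iff.2 ⟨hlit 1, hlit 2⟩⟩⟩

theorem constituent_decides (hφ : Is1Formula φ) (S : Finset (Fin 3)) (w : S) :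
    (Holds S w φ → Prv ConAx (imp (constituent w S) φ)) ∧
      (¬Holds S w φ → Prv ConAx (imp (constituent w S) (neg φ))) := by
  induction φ generalizing w with
  | tt x =>
    obtain rfl := is1Formula_tt_iff.1 hφ
    have h := (prv_constituent_imp_chi (s := w) (S := S)).imp_trans (prv_chi_imp_tt w 1)
    exact ⟨fun hw => by rwa [if_pos (holds_tt.1 hw)] at h,
      fun hw => by rwa [if_neg (mt holds_tt.2 hw)] at h⟩
  | ff x =>
    obtain rfl := is1Formula_ff_iff.1 hφ
    have h := (prv_constituent_imp_chi (s := w) (S := S)).imp_trans (prv_chi_imp_ff w 1)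
    exact ⟨fun hw => by rwa [if_pos (holds_ff.1 hw)] at h,
      fun hw => by rwa [if_neg (mt holds_ff.2 hw)] at h⟩
  | neg φ ih =>
    obtain ⟨hpos, hneg⟩ := ih hφ w
    exact ⟨hneg, fun h => (hpos (not_not.1 h)).imp_trans (Prv.taut fun v => by simp [imp])⟩
  | and φ ψ ihφ ihψ =>
    obtain ⟨hφ, hψ⟩ := is1Formula_and_iff.1 hφ
    obtain ⟨hφpos, hφneg⟩ := ihφ hφ w
    obtain ⟨hψpos, hψneg⟩ := ihψ hψ w
    refine ⟨fun ⟨h1, h2⟩ => ((hφpos h1).and_intro (hψpos h2)).mp_taut fun v h => by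
      simp [imp] at h ⊢; grind, fun h => ?_⟩
    by_cases h1 : Holds S w φ
    · exact (hψneg fun h2 => h ⟨h1, h2⟩).imp_trans (Prv.taut fun v => by simp [imp]; grind)
    · exact (hφneg h1).imp_trans (Prv.taut fun v => by simp [imp]; grind)
  | box φ ih =>
    refine ⟨fun h => prv_constituent_imp_box (fun t ht => (ih hφ ⟨t, ht⟩).1 (h _)) w,
      fun h => ?_⟩
    obtain ⟨u, hu⟩ := not_forall.1 h
    exact prv_constituent_imp_not_box u.2 ((ih hφ u).2 hu) w

theorem prv_iff_iff_forall_holds (hφ : Is1Formula φ) (hψ : Is1Formula ψ) :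
    Prv ConAx (Fml.iff φ ψ) ↔ ∀ (S : Finset (Fin 3)) (w : S), Holds S w φ ↔ Holds S w ψ := by
  refine ⟨fun h S w => ?_, fun h => prv_of_forall_constituent fun S w => ?_⟩
  · have := h.holds S w
    simp only [Fml.iff, imp, holds_and, holds_neg] at this
    tauto
  obtain ⟨hφpos, hφneg⟩ := constituent_decides hφ S w
  obtain ⟨hψpos, hψneg⟩ := constituent_decides hψ S w
  by_cases hw : Holds S w φ
  · exact ((hφpos hw).and_intro (hψpos ((h S w).1 hw))).mp_taut fun v h => by
      simp [imp, Fml.iff] at h ⊢; grind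
  · exact ((hφneg hw).and_intro (hψneg (mt (h S w).2 hw))).mp_taut fun v h => by
      simp [imp, Fml.iff] at h ⊢; grind

/-- Unlike `bigOr`, the empty disjunction is a contradiction in `x₁`, so that it is a
1-formula. -/
def disj1 (l : List Fml) : Fml := l.foldr Fml.or (Fml.and (tt 1) (neg (tt 1)))

theorem holds_disj1 {S : Finset (Fin 3)} {w : S} :
    Holds S w (disj1 l) ↔ ∃ ψ ∈ l, Holds S w ψ := by
  induction l with
  | nil => simp [disj1]
  | cons ψ l ih =>
    simp only [disj1, List.foldr_cons, Fml.or, holds_neg, holds_and] at ih ⊢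
    rw [ih, List.exists_mem_cons_iff, not_and_or, not_not, not_not]

theorem is1Formula_disj1 (h : ∀ ψ ∈ l, Is1Formula ψ) : Is1Formula (disj1 l) := by
  induction l with
  | nil => simp [disj1, is1Formula_and_iff, is1Formula_neg_iff, is1Formula_tt_iff]
  | cons ψ l ih =>
    simp only [List.forall_mem_cons] at h
    exact is1Formula_neg_iff.2 (is1Formula_and_iff.2 ⟨h.1, ih h.2⟩)

theorem exists_is1Formula_holds_iff (f : PointedProfile → Prop) :
    ∃ φ, Is1Formula φ ∧ ∀ (S : Finset (Fin 3)) (w : S), Holds S w φ ↔ f ⟨S, w⟩ := by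
  classical
  refine ⟨disj1 ((Finset.univ.filter f).toList.map fun p => constituent p.2 p.1),
    is1Formula_disj1 ?_, fun S w => ?_⟩
  · simp only [List.mem_map]
    rintro _ ⟨p, -, rfl⟩
    exact is1Formula_constituent _ _
  simp only [holds_disj1, List.mem_map, Finset.mem_toList, Finset.mem_filter, Finset.mem_univ,
    true_and]
  constructor
  · rintro ⟨_, ⟨⟨T, u⟩, hf, rfl⟩, hu⟩
    obtain ⟨hwu, rfl⟩ := holds_constituent.1 hu
    rwa [Subtype.ext hwu]
  · exact fun hf => ⟨_, ⟨⟨S, w⟩, hf, rfl⟩, holds_constituent.2 ⟨rfl, rfl⟩⟩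

end OneFormulas

/-- up to S5[Con]-provable equivalence there are exactly `4096`
one-variable formulas. -/
theorem count_one_formulas_S5Con :
    Nat.card (Quot (fun φ ψ : {f : Fml // Is1Formula f} =>
      Prv ConAx (Fml.iff φ.1 ψ.1))) = 4096 := by
  let sem : Quot (fun φ ψ : {f : Fml // Is1Formula f} => Prv ConAx (Fml.iff φ.1 ψ.1)) →
      PointedProfile → Prop :=
    Quot.lift (fun φ p => Holds p.1 p.2 φ.1) fun φ ψ h =>
      funext fun p => propext <| (prv_iff_iff_forall_holds φ.2 ψ.2).1 h p.1 p.2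
  have hinj : sem.Injective := by
    rintro ⟨φ⟩ ⟨ψ⟩ h
    exact Quot.sound <|
      (prv_iff_iff_forall_holds φ.2 ψ.2).2 fun S w => iff_of_eq (congrFun h ⟨S, w⟩)
  have hsurj : sem.Surjective := fun f => by
    obtain ⟨φ, hφ, hf⟩ := exists_is1Formula_holds_iff f
    exact ⟨Quot.mk _ ⟨φ, hφ⟩, funext fun p => propext (hf p.1 p.2)⟩
  rw [Nat.card_eq_of_bijective sem ⟨hinj, hsurj⟩, Nat.card_fun, card_pointedProfile,
    Nat.card_eq_fintype_card, Fintype.card_prop]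
  norm_num

end KripkeModal
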